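/- arXiv:1805.11955 — 4 statements merged into one kernel-verified Lean document; each statement's English description precedes it below -/
import Mathlib

section
/- Let G be a groupoid and let R be a G-graded ring that is s-unital epsilon-strongly graded. If R_0 is a maximal commutative subring of R, then R is a simple ring if and only if R is graded simple. -/
/-!
Let `I` be a nonzero ideal and `x ∈ I` a nonzero element with the fewest homogeneous components.
If `x_g ≠ 0` with `g : a ⟶ b`, epsilon-strongness gives `s ∈ R_{g⁻¹}` with `x_g s ≠ 0`, and
`y = x s ∈ I` has no more components than `x` and a nonzero component in `R_{1_b}`. For
`z ∈ R_e` the commutator `z y - y z` lies in `I` and, `R₀` being commutative, has strictly fewer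
components than `y`; so by minimality `y` commutes with `R₀` and lies in `R₀` by maximality.
A local unit `u ∈ R_{1_b}` of `y_{1_b}` then gives the nonzero homogeneous element `u y = y_{1_b}`
of `I`, so the graded ideal `⨆ g, I ∩ R_g ⊆ I` is nonzero, hence equal to `R`.
-/

open Pointwise CategoryTheory

namespace PaperGrpd

/-- The set of morphisms `G₁` of a groupoid, bundled with their domain and codomain:
`⟨a, b, g⟩` is the morphism `g : a ⟶ b`, with `d(g) = a` and `c(g) = b`. -/
abbrev GMor (G : Type*) [Groupoid G] := Σ a b : G, a ⟶ b

variable {G : Type*} [Groupoid G] {R : Type*} [NonUnitalRing R]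

/-- The additive subgroup of finite sums of products `a * b` with `a ∈ A`, `b ∈ B`. -/
def sumProd (A B : AddSubgroup R) : AddSubgroup R :=
  AddSubgroup.closure ((A : Set R) * (B : Set R))

/-- `I` is a two-sided ideal of the (possibly non-unital) ring `R`. -/
def IsRingIdeal (I : AddSubgroup R) : Prop :=
  ∀ r : R, ∀ x ∈ I, r * x ∈ I ∧ x * r ∈ I

/-- `𝓡` is a grading of `R` by the groupoid `G`:
`R = ⊕_{g ∈ G₁} R_g`, with `R_g R_h ⊆ R_{gh}` for composable pairs and
`R_g R_h = {0}` for non-composable pairs. -/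
def IsGroupoidGrading (𝓡 : GMor G → AddSubgroup R) : Prop :=
  (⨆ m : GMor G, 𝓡 m) = (⊤ : AddSubgroup R) ∧
  (∀ m : GMor G, Disjoint (𝓡 m) (⨆ m' ∈ {m' : GMor G | m' ≠ m}, 𝓡 m')) ∧
  (∀ (a b c : G) (g : b ⟶ c) (h : a ⟶ b),
    ∀ x ∈ 𝓡 ⟨b, c, g⟩, ∀ y ∈ 𝓡 ⟨a, b, h⟩, x * y ∈ 𝓡 ⟨a, c, h ≫ g⟩) ∧
  (∀ m m' : GMor G, m.1 ≠ m'.2.1 → ∀ x ∈ 𝓡 m, ∀ y ∈ 𝓡 m', x * y = 0)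

/-- `R₀ = ⊕_{e ∈ G₀} R_e`. -/
def grZero (𝓡 : GMor G → AddSubgroup R) : AddSubgroup R :=
  ⨆ e : G, 𝓡 ⟨e, e, 𝟙 e⟩

/-- `∩_{e ∈ G₀} C_R(Z(R_e))` as a subset of `R`. -/
def capCent (𝓡 : GMor G → AddSubgroup R) : Set R :=
  {x : R | ∀ e : G, ∀ z : R,
    (z ∈ 𝓡 ⟨e, e, 𝟙 e⟩ ∧ ∀ y ∈ 𝓡 ⟨e, e, 𝟙 e⟩, z * y = y * z) → x * z = z * x}

/-- `R` is graded simple: `{0}` and `R` are the only graded ideals. -/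
def GradedSimple (𝓡 : GMor G → AddSubgroup R) : Prop :=
  ∀ I : AddSubgroup R, IsRingIdeal I → I = (⨆ m : GMor G, (I ⊓ 𝓡 m)) →
    I = ⊥ ∨ I = ⊤

/-- The grading is left non-degenerate. -/
def LeftNonDeg (𝓡 : GMor G → AddSubgroup R) : Prop :=
  ∀ (a b : G) (g : a ⟶ b), ∀ r ∈ 𝓡 ⟨a, b, g⟩, r ≠ 0 →
    ∃ x ∈ 𝓡 ⟨b, a, Groupoid.inv g⟩, x * r ≠ 0

/-- The grading is right non-degenerate. -/
def RightNonDeg (𝓡 : GMor G → AddSubgroup R) : Prop :=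
  ∀ (a b : G) (g : a ⟶ b), ∀ r ∈ 𝓡 ⟨a, b, g⟩, r ≠ 0 →
    ∃ x ∈ 𝓡 ⟨b, a, Groupoid.inv g⟩, r * x ≠ 0

/-- `R` is a simple ring: `{0}` and `R` are the only two-sided ideals. -/
def RingSimple (R' : Type*) [NonUnitalRing R'] : Prop :=
  ∀ I : AddSubgroup R', IsRingIdeal I → I = ⊥ ∨ I = ⊤

section Decomposition

open DirectSum

variable {ι M : Type*} [DecidableEq ι] [AddCommGroup M] (ℳ : ι → AddSubgroup M) [Decomposition ℳ]

theorem coe_decompose_map_of_mapsTo (f : M →+ M) (hf : ∀ i, ∀ x ∈ ℳ i, f x ∈ ℳ i)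
    (x : M) (i : ι) : (decompose ℳ (f x) i : M) = f (decompose ℳ x i) := by
  induction x using Decomposition.inductionOn ℳ with
  | zero => simp
  | @homogeneous j x =>
    have hfx : f x ∈ ℳ j := hf j x x.2
    rcases eq_or_ne j i with rfl | hji
    · rw [decompose_coe, of_eq_same, decompose_of_mem_same ℳ hfx]
    · rw [decompose_coe, of_eq_of_ne _ _ _ hji.symm, decompose_of_mem_ne ℳ hfx hji]
      simp
  | add x y hx hy => simp [hx, hy]

variable [∀ i (x : ℳ i), Decidable (x ≠ 0)]

theorem mem_support_decompose_iff {x : M} {i : ι} :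
    i ∈ (decompose ℳ x).support ↔ (decompose ℳ x i : M) ≠ 0 :=
  DFinsupp.mem_support_iff.trans (not_congr ZeroMemClass.coe_eq_zero.symm)

theorem coe_decompose_map (f : M →+ M) (φ : ι → ι) (hf : ∀ i, ∀ x ∈ ℳ i, f x ∈ ℳ (φ i))
    (x : M) (j : ι) :
    (decompose ℳ (f x) j : M) =
      ∑ i ∈ (decompose ℳ x).support with φ i = j, f (decompose ℳ x i) := by
  conv_lhs => rw [← sum_support_decompose ℳ x, map_sum, decompose_sum]
  rw [DFinsupp.finsetSum_apply, AddSubmonoidClass.coe_finsetSum, Finset.sum_filter]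
  refine Finset.sum_congr rfl fun i _ => ?_
  split_ifs with h
  · exact decompose_of_mem_same ℳ (h ▸ hf i _ (decompose ℳ x i).2)
  · exact decompose_of_mem_ne ℳ (hf i _ (decompose ℳ x i).2) h

theorem support_decompose_map_subset (f : M →+ M) (φ : ι → ι)
    (hf : ∀ i, ∀ x ∈ ℳ i, f x ∈ ℳ (φ i)) (x : M) :
    (decompose ℳ (f x)).support ⊆ (decompose ℳ x).support.image φ := by
  intro j hj
  rw [mem_support_decompose_iff, coe_decompose_map ℳ f φ hf] at hj
  obtain ⟨i, hi, -⟩ := Finset.exists_ne_zero_of_sum_ne_zero hj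
  obtain ⟨hsupp, rfl⟩ := Finset.mem_filter.1 hi
  exact Finset.mem_image_of_mem φ hsupp

end Decomposition

section GradedIdeal

variable {ι : Type*} {𝓡 : ι → AddSubgroup R}

theorem mul_eq_zero_of_mem_sumProd {A B : AddSubgroup R} {r v : R} (h : ∀ s ∈ A, r * s = 0)
    (hv : v ∈ sumProd A B) : r * v = 0 := by
  have hle : sumProd A B ≤ (AddMonoidHom.mulLeft r).ker := by
    refine (AddSubgroup.closure_le _).2 ?_
    rintro _ ⟨p, hp, q, -, rfl⟩
    simp [← mul_assoc, h p hp]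
  exact hle hv

theorem isRingIdeal_iSup_inf (htop : ⨆ i, 𝓡 i = ⊤)
    (hmul : ∀ i j, ∀ x ∈ 𝓡 i, ∀ y ∈ 𝓡 j, ∃ k, x * y ∈ 𝓡 k) {I : AddSubgroup R}
    (hI : IsRingIdeal I) : IsRingIdeal (⨆ i, I ⊓ 𝓡 i) := by
  set J := ⨆ i, I ⊓ 𝓡 i
  have hmem : ∀ {k x}, x ∈ I → x ∈ 𝓡 k → x ∈ J := fun hI hk =>
    le_iSup (fun i => I ⊓ 𝓡 i) _ ⟨hI, hk⟩
  have hhom : ∀ i, ∀ r ∈ 𝓡 i,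
      J ≤ J.comap (AddMonoidHom.mulLeft r) ⊓ J.comap (AddMonoidHom.mulRight r) := by
    refine fun i r hr => iSup_le fun j w hw => ⟨?_, ?_⟩
    · obtain ⟨k, hk⟩ := hmul i j r hr w hw.2
      exact hmem (hI r w hw.1).1 hk
    · obtain ⟨k, hk⟩ := hmul j i w hw.2 r hr
      exact hmem (hI r w hw.1).2 hk
  have hall : ∀ w ∈ J,
      ⊤ ≤ J.comap (AddMonoidHom.mulRight w) ⊓ J.comap (AddMonoidHom.mulLeft w) :=
    fun w hw => htop ▸ iSup_le fun i r hr => ⟨(hhom i r hr hw).1, (hhom i r hr hw).2⟩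
  exact fun r w hw => hall w hw (AddSubgroup.mem_top r)

end GradedIdeal

section Groupoid

open DirectSum
open scoped Classical Finset

variable {𝓡 : GMor G → AddSubgroup R}

namespace IsGroupoidGrading

theorem isInternal (hgr : IsGroupoidGrading 𝓡) : DirectSum.IsInternal 𝓡 := by
  have : DirectSum.IsInternal fun m => AddSubgroup.toIntSubmodule (𝓡 m) := by
    rw [DirectSum.isInternal_submodule_iff_iSupIndep_and_iSup_eq_top]
    constructor
    · rw [show (fun m => AddSubgroup.toIntSubmodule (𝓡 m)) =
        (AddSubgroup.toIntSubmodule : AddSubgroup R ≃o _) ∘ 𝓡 from rfl,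
        iSupIndep_map_orderIso_iff]
      exact fun m => by simpa using hgr.2.1 m
    · rw [← AddSubgroup.toIntSubmodule.map_iSup, hgr.1]
      rfl
  exact this

theorem mul_mem (hgr : IsGroupoidGrading 𝓡) {a b c : G} {g : b ⟶ c} {h : a ⟶ b} {x y : R}
    (hx : x ∈ 𝓡 ⟨b, c, g⟩) (hy : y ∈ 𝓡 ⟨a, b, h⟩) : x * y ∈ 𝓡 ⟨a, c, h ≫ g⟩ :=
  hgr.2.2.1 a b c g h x hx y hy

theorem mul_eq_zero (hgr : IsGroupoidGrading 𝓡) {m m' : GMor G} (h : m.1 ≠ m'.2.1) {x y : R}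
    (hx : x ∈ 𝓡 m) (hy : y ∈ 𝓡 m') : x * y = 0 :=
  hgr.2.2.2 m m' h x hx y hy

theorem exists_mul_mem (hgr : IsGroupoidGrading 𝓡) {m m' : GMor G} {x y : R}
    (hx : x ∈ 𝓡 m) (hy : y ∈ 𝓡 m') : ∃ n, x * y ∈ 𝓡 n := by
  obtain ⟨b, c, g⟩ := m
  obtain ⟨a, b', h⟩ := m'
  by_cases hb : b = b'
  · subst hb
    exact ⟨_, hgr.mul_mem hx hy⟩
  · exact ⟨⟨b, c, g⟩, hgr.mul_eq_zero hb hx hy ▸ zero_mem _⟩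

theorem mul_mem_of_mem_id_left (hgr : IsGroupoidGrading 𝓡) {e : G} {m : GMor G} {z r : R}
    (hz : z ∈ 𝓡 ⟨e, e, 𝟙 e⟩) (hr : r ∈ 𝓡 m) : z * r ∈ 𝓡 m := by
  obtain ⟨c, d, h⟩ := m
  by_cases hd : e = d
  · subst hd
    simpa using hgr.mul_mem hz hr
  · exact hgr.mul_eq_zero hd hz hr ▸ zero_mem _

theorem mul_mem_of_mem_id_right (hgr : IsGroupoidGrading 𝓡) {e : G} {m : GMor G} {z r : R}
    (hz : z ∈ 𝓡 ⟨e, e, 𝟙 e⟩) (hr : r ∈ 𝓡 m) : r * z ∈ 𝓡 m := by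
  obtain ⟨c, d, h⟩ := m
  by_cases hc : c = e
  · subst hc
    simpa using hgr.mul_mem hr hz
  · exact hgr.mul_eq_zero hc hr hz ▸ zero_mem _

theorem sumProd_le (hgr : IsGroupoidGrading 𝓡) {a b c : G} (g : b ⟶ c) (h : a ⟶ b) :
    sumProd (𝓡 ⟨b, c, g⟩) (𝓡 ⟨a, b, h⟩) ≤ 𝓡 ⟨a, c, h ≫ g⟩ := by
  rw [sumProd, AddSubgroup.closure_le]
  rintro _ ⟨u, hu, v, hv, rfl⟩
  exact hgr.mul_mem hu hv

end IsGroupoidGrading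

theorem le_grZero (e : G) : 𝓡 ⟨e, e, 𝟙 e⟩ ≤ grZero 𝓡 :=
  le_iSup (fun e => 𝓡 ⟨e, e, 𝟙 e⟩) e

theorem GradedSimple.eq_top (hgs : GradedSimple 𝓡) (hgr : IsGroupoidGrading 𝓡)
    {I : AddSubgroup R} (hI : IsRingIdeal I) {m : GMor G} {x : R} (hxI : x ∈ I)
    (hxm : x ∈ 𝓡 m) (hx : x ≠ 0) : I = ⊤ := by
  set J := ⨆ m, I ⊓ 𝓡 m
  have hJ : IsRingIdeal J :=
    isRingIdeal_iSup_inf hgr.1 (fun _ _ _ hx _ hy => hgr.exists_mul_mem hx hy) hI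
  have hJle : J ≤ I := iSup_le fun _ => inf_le_left
  have hJgr : J = ⨆ m, J ⊓ 𝓡 m :=
    le_antisymm (iSup_mono fun m => le_inf (le_iSup (fun m => I ⊓ 𝓡 m) m) inf_le_right)
      (iSup_le fun _ => inf_le_left)
  rcases hgs J hJ hJgr with hbot | htop
  · have hxJ : x ∈ J := le_iSup (fun m => I ⊓ 𝓡 m) m ⟨hxI, hxm⟩
    exact absurd (AddSubgroup.mem_bot.1 (hbot ▸ hxJ)) hx
  · exact top_le_iff.1 (htop ▸ hJle)

/-- `m g⁻¹`, the degree of `r * s` for `r ∈ R_m` and `s ∈ R_{g⁻¹}`. When the domain of `m` is not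
that of `g`, `r * s = 0` and the value (`m`) is irrelevant. -/
noncomputable def degMulInv {a b : G} (g : a ⟶ b) (m : GMor G) : GMor G :=
  if hc : m.1 = a then ⟨b, m.2.1, Groupoid.inv g ≫ eqToHom hc.symm ≫ m.2.2⟩ else m

theorem degMulInv_self {a b : G} (g : a ⟶ b) : degMulInv g ⟨a, b, g⟩ = ⟨b, b, 𝟙 b⟩ := by
  simp [degMulInv]

theorem eq_of_degMulInv_eq_id {a b : G} (g : a ⟶ b) {m : GMor G} (hm : m.1 = a)
    (h : degMulInv g m = ⟨b, b, 𝟙 b⟩) : m = ⟨a, b, g⟩ := by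
  obtain ⟨c, d, k⟩ := m
  simp only at hm
  subst hm
  simp only [degMulInv, ↓reduceDIte, Groupoid.inv_eq_inv, eqToHom_refl, Category.id_comp,
    Sigma.mk.injEq, heq_eq_eq, true_and] at h
  obtain ⟨rfl, h⟩ := h
  rw [heq_iff_eq, ← cancel_epi g, IsIso.hom_inv_id_assoc] at h
  simp [h]

theorem IsGroupoidGrading.mul_mem_degMulInv (hgr : IsGroupoidGrading 𝓡) {a b : G} {g : a ⟶ b}
    {m : GMor G} {r s : R} (hr : r ∈ 𝓡 m) (hs : s ∈ 𝓡 ⟨b, a, Groupoid.inv g⟩) :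
    r * s ∈ 𝓡 (degMulInv g m) := by
  obtain ⟨c, d, h⟩ := m
  by_cases hc : c = a
  · subst hc
    simpa [degMulInv] using hgr.mul_mem hr hs
  · rw [degMulInv, dif_neg hc, hgr.mul_eq_zero hc hr hs]
    exact zero_mem _

variable [Decomposition 𝓡]

theorem exists_decompose_mul_id_ne_zero (hgr : IsGroupoidGrading 𝓡)
    (hright : ∀ (a b : G) (g : a ⟶ b), ∀ r ∈ 𝓡 ⟨a, b, g⟩,
      ∃ v ∈ sumProd (𝓡 ⟨b, a, Groupoid.inv g⟩) (𝓡 ⟨a, b, g⟩), r * v = r)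
    {x : R} (hx : x ≠ 0) :
    ∃ (s : R) (b : G), (decompose 𝓡 (x * s) ⟨b, b, 𝟙 b⟩ : R) ≠ 0 ∧
      #(decompose 𝓡 (x * s)).support ≤ #(decompose 𝓡 x).support := by
  obtain ⟨⟨a, b, g⟩, hg⟩ : (decompose 𝓡 x).support.Nonempty := by
    refine Finset.nonempty_iff_ne_empty.2 fun h => hx ((decompose 𝓡).injective ?_)
    rw [DFinsupp.support_eq_empty.1 h, decompose_zero]
  set xg := (decompose 𝓡 x ⟨a, b, g⟩ : R)
  have hxg : xg ≠ 0 := (mem_support_decompose_iff 𝓡).1 hg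
  obtain ⟨v, hv, hxv⟩ := hright a b g xg (decompose 𝓡 x _).2
  obtain ⟨s, hs, hxs⟩ : ∃ s ∈ 𝓡 ⟨b, a, Groupoid.inv g⟩, xg * s ≠ 0 := by
    by_contra! h
    exact hxg (by rw [← hxv]; exact mul_eq_zero_of_mem_sumProd h hv)
  have hdeg : ∀ m, ∀ r ∈ 𝓡 m, AddMonoidHom.mulRight s r ∈ 𝓡 (degMulInv g m) :=
    fun m r hr => hgr.mul_mem_degMulInv hr hs
  refine ⟨s, b, ?_, ?_⟩
  · rw [← AddMonoidHom.mulRight_apply, coe_decompose_map 𝓡 _ _ hdeg,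
      Finset.sum_eq_single_of_mem _ (Finset.mem_filter.2 ⟨hg, degMulInv_self g⟩)]
    · exact hxs
    · intro m hm hne
      by_cases hma : m.1 = a
      · exact absurd (eq_of_degMulInv_eq_id g hma (Finset.mem_filter.1 hm).2) hne
      · exact hgr.mul_eq_zero hma (decompose 𝓡 x m).2 hs
  · rw [← AddMonoidHom.mulRight_apply]
    exact (Finset.card_le_card (support_decompose_map_subset 𝓡 _ _ hdeg x)).trans
      Finset.card_image_le

theorem card_support_decompose_commutator_lt (hgr : IsGroupoidGrading 𝓡)
    (hcomm : ∀ p ∈ grZero 𝓡, ∀ q ∈ grZero 𝓡, p * q = q * p) {e b : G} {z y : R}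
    (hz : z ∈ 𝓡 ⟨e, e, 𝟙 e⟩) (hy : (decompose 𝓡 y ⟨b, b, 𝟙 b⟩ : R) ≠ 0) :
    #(decompose 𝓡 (z * y - y * z)).support < #(decompose 𝓡 y).support := by
  set f := AddMonoidHom.mulLeft z - AddMonoidHom.mulRight z
  have hf : ∀ m, ∀ r ∈ 𝓡 m, f r ∈ 𝓡 m := fun m r hr =>
    sub_mem (hgr.mul_mem_of_mem_id_left hz hr) (hgr.mul_mem_of_mem_id_right hz hr)
  have hsub : (decompose 𝓡 (f y)).support ⊆ (decompose 𝓡 y).support.erase ⟨b, b, 𝟙 b⟩ := by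
    intro m hm
    rw [mem_support_decompose_iff, coe_decompose_map_of_mapsTo 𝓡 f hf] at hm
    refine Finset.mem_erase.2 ⟨?_, (mem_support_decompose_iff 𝓡).2 fun h => hm (by simp [h])⟩
    rintro rfl
    exact hm (sub_eq_zero.2 (hcomm _ (le_grZero e hz) _ (le_grZero b (decompose 𝓡 y _).2)))
  calc #(decompose 𝓡 (f y)).support ≤ #((decompose 𝓡 y).support.erase ⟨b, b, 𝟙 b⟩) :=
        Finset.card_le_card hsub
    _ < #(decompose 𝓡 y).support :=
        Finset.card_erase_lt_of_mem ((mem_support_decompose_iff 𝓡).2 hy)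

theorem exists_mul_mem_id_ne_zero (hgr : IsGroupoidGrading 𝓡) {b : G}
    (hleft : ∀ r ∈ 𝓡 ⟨b, b, 𝟙 b⟩,
      ∃ u ∈ sumProd (𝓡 ⟨b, b, 𝟙 b⟩) (𝓡 ⟨b, b, Groupoid.inv (𝟙 b)⟩), u * r = r)
    {y : R} (hy0 : y ∈ grZero 𝓡) (hy : (decompose 𝓡 y ⟨b, b, 𝟙 b⟩ : R) ≠ 0) :
    ∃ u, u * y ∈ 𝓡 ⟨b, b, 𝟙 b⟩ ∧ u * y ≠ 0 := by
  obtain ⟨u, hu, huy⟩ := hleft _ (decompose 𝓡 y _).2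
  have hub : u ∈ 𝓡 ⟨b, b, 𝟙 b⟩ := by
    simpa only [Groupoid.inv_comp] using hgr.sumProd_le (𝟙 b) (Groupoid.inv (𝟙 b)) hu
  have hle : grZero 𝓡 ≤ (𝓡 ⟨b, b, 𝟙 b⟩).comap (AddMonoidHom.mulLeft u) :=
    iSup_le fun _ _ hr => hgr.mul_mem_of_mem_id_right hr hub
  have hmem : u * y ∈ 𝓡 ⟨b, b, 𝟙 b⟩ := hle hy0
  refine ⟨u, hmem, ?_⟩
  rwa [← decompose_of_mem_same 𝓡 hmem, show u * y = AddMonoidHom.mulLeft u y from rfl,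
    coe_decompose_map_of_mapsTo 𝓡 _ (fun _ _ hr => hgr.mul_mem_of_mem_id_left hub hr),
    AddMonoidHom.coe_mulLeft, huy]

theorem exists_mem_id_ne_zero_of_mem_ne_zero (hgr : IsGroupoidGrading 𝓡)
    (heps : ∀ (a b : G) (g : a ⟶ b), ∀ r ∈ 𝓡 ⟨a, b, g⟩,
      (∃ u ∈ sumProd (𝓡 ⟨a, b, g⟩) (𝓡 ⟨b, a, Groupoid.inv g⟩), u * r = r) ∧
      (∃ v ∈ sumProd (𝓡 ⟨b, a, Groupoid.inv g⟩) (𝓡 ⟨a, b, g⟩), r * v = r))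
    (hmax : {x : R | ∀ y ∈ grZero 𝓡, x * y = y * x} = (grZero 𝓡 : Set R))
    {I : AddSubgroup R} (hI : IsRingIdeal I) {x : R} (hxI : x ∈ I) (hx : x ≠ 0) :
    ∃ b : G, ∃ y ∈ I, y ∈ 𝓡 ⟨b, b, 𝟙 b⟩ ∧ y ≠ 0 := by
  have hcomm : ∀ p ∈ grZero 𝓡, ∀ q ∈ grZero 𝓡, p * q = q * p := fun p hp =>
    (Set.ext_iff.1 hmax p).2 hp
  induction hn : #(decompose 𝓡 x).support using Nat.strong_induction_on generalizing x with
  | _ n ih =>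
  obtain ⟨s, b, hyb, hcard⟩ :=
    exists_decompose_mul_id_ne_zero hgr (fun a b g r hr => (heps a b g r hr).2) hx
  have hyI : x * s ∈ I := (hI s x hxI).2
  by_cases hcent : ∀ e, ∀ z ∈ 𝓡 ⟨e, e, 𝟙 e⟩, z * (x * s) = x * s * z
  · have hy0 : x * s ∈ grZero 𝓡 := by
      have hle : grZero 𝓡 ≤ (NonUnitalSubring.centralizer {x * s}).toAddSubgroup :=
        iSup_le fun e z hz => NonUnitalSubring.mem_centralizer_iff.2 fun _ hy =>
          Set.mem_singleton_iff.1 hy ▸ (hcent e z hz).symm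
      exact (Set.ext_iff.1 hmax _).1 fun w hw =>
        NonUnitalSubring.mem_centralizer_iff.1 (hle hw) _ rfl
    obtain ⟨u, hu, hu0⟩ :=
      exists_mul_mem_id_ne_zero hgr (fun r hr => (heps b b (𝟙 b) r hr).1) hy0 hyb
    exact ⟨b, u * (x * s), (hI u _ hyI).1, hu, hu0⟩
  · push Not at hcent
    obtain ⟨e, z, hz, hzy⟩ := hcent
    exact ih _ (hn ▸ (card_support_decompose_commutator_lt hgr hcomm hz hyb).trans_le hcard)
      (sub_mem (hI z _ hyI).1 (hI z _ hyI).2) (sub_ne_zero.2 hzy) rfl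

end Groupoid

/-- Let `G` be a groupoid and `R` a `G`-graded ring that is
s-unital epsilon-strongly graded. If `R₀` is a maximal commutative subring of `R`,
then `R` is simple iff `R` is graded simple. -/
theorem stmt12 {G : Type*} [Groupoid G] {R : Type*} [NonUnitalRing R]
    (𝓡 : GMor G → AddSubgroup R) (hgr : IsGroupoidGrading 𝓡)
    (heps : ∀ (a b : G) (g : a ⟶ b), ∀ r ∈ 𝓡 ⟨a, b, g⟩,
      (∃ u ∈ sumProd (𝓡 ⟨a, b, g⟩) (𝓡 ⟨b, a, Groupoid.inv g⟩), u * r = r) ∧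
      (∃ v ∈ sumProd (𝓡 ⟨b, a, Groupoid.inv g⟩) (𝓡 ⟨a, b, g⟩), r * v = r))
    (hmax : {x : R | ∀ y ∈ grZero 𝓡, x * y = y * x} = (grZero 𝓡 : Set R)) :
    RingSimple R ↔ GradedSimple 𝓡 := by
  refine ⟨fun hs I hI _ => hs I hI, fun hgs I hI => ?_⟩
  classical
  let := hgr.isInternal.chooseDecomposition
  obtain hbot | ⟨x, hxI, hx⟩ := I.bot_or_exists_ne_zero
  · exact Or.inl hbot
  obtain ⟨b, y, hyI, hyb, hy⟩ := exists_mem_id_ne_zero_of_mem_ne_zero hgr heps hmax hI hxI hx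
  exact Or.inr (hgs.eq_top hgr hI hyI hyb hy)

end PaperGrpd
end

section
/- Let A be a ring and M an A-bimodule. Then M is s-unital (for every m ∈ M there exist a, b ∈ A with am = m and mb = m) if and only if for every n ∈ ℕ and all m_1, …, m_n ∈ M there exists c ∈ A such that c m_i = m_i c = m_i for all i ∈ {1, …, n}. -/
/-!
Both actions factor through non-unital ring homomorphisms into `AddMonoid.End M` (the right
one from `Aᵐᵒᵖ`). For the circle operation `a ∘ b = a + b - a b` one has
`1 - (a ∘ b) = (1 - a)(1 - b)`, so if `e` fixes `m₂, …, mₙ` on the left and `u` fixes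
`m₁ - e m₁`, then `u ∘ e` fixes all of `m₁, …, mₙ`. The same holds on the right, and a left
unit `a` and a right unit `b` of the finite family combine into the two-sided unit `b + a - b a`.
-/

namespace PaperMod

open MulOpposite

section LocalUnits

variable {A R M : Type*} [NonUnitalRing A] [Ring R] [AddCommGroup M] [Module R M]
  (φ : A →ₙ+* R)

theorem one_sub_map_circle (a b : A) : 1 - φ (a + b - a * b) = (1 - φ a) * (1 - φ b) := by
  simp only [map_sub, map_add, map_mul]
  noncomm_ring

theorem map_circle_smul_eq_self_iff (a b : A) (m : M) :
    φ (a + b - a * b) • m = m ↔ φ a • (m - φ b • m) = m - φ b • m := by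
  have key : m - φ (a + b - a * b) • m = (m - φ b • m) - φ a • (m - φ b • m) :=
    calc m - φ (a + b - a * b) • m = (1 - φ (a + b - a * b)) • m := by rw [sub_smul, one_smul]
      _ = (1 - φ a) • (1 - φ b) • m := by rw [one_sub_map_circle, mul_smul]
      _ = (m - φ b • m) - φ a • (m - φ b • m) := by simp only [sub_smul, one_smul]
  rw [← sub_eq_zero, ← neg_sub, neg_eq_zero, key, sub_eq_zero, eq_comm]

theorem map_circle_smul_eq_self {b : A} {m : M} (a : A) (hb : φ b • m = m) :
    φ (a + b - a * b) • m = m := by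
  rw [map_circle_smul_eq_self_iff, hb, sub_self, smul_zero]

theorem exists_smul_eq_self_of_finset (h : ∀ m : M, ∃ a, φ a • m = m) (s : Finset M) :
    ∃ a, ∀ m ∈ s, φ a • m = m := by
  classical
  induction s using Finset.induction_on with
  | empty => exact ⟨0, by simp⟩
  | insert m s _ ih =>
    obtain ⟨e, he⟩ := ih
    obtain ⟨u, hu⟩ := h (m - φ e • m)
    refine ⟨u + e - u * e, (Finset.forall_mem_insert _ _ _).2 ⟨?_, fun n hn => ?_⟩⟩
    · exact (map_circle_smul_eq_self_iff φ u e m).2 hu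
    · exact map_circle_smul_eq_self φ u (he n hn)

variable {S : Type*} [Ring S] [Module S M] (ψ : Aᵐᵒᵖ →ₙ+* S)

theorem exists_two_sided_smul_eq_self_of_finset (hl : ∀ m : M, ∃ a, φ a • m = m)
    (hr : ∀ m : M, ∃ b, ψ (op b) • m = m) (s : Finset M) :
    ∃ c, ∀ m ∈ s, φ c • m = m ∧ ψ (op c) • m = m := by
  obtain ⟨a, ha⟩ := exists_smul_eq_self_of_finset φ hl s
  obtain ⟨b, hb⟩ := exists_smul_eq_self_of_finset ψ
    (fun m => (hr m).elim fun b h => ⟨op b, h⟩) s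
  refine ⟨b.unop + a - b.unop * a, fun m hm => ⟨map_circle_smul_eq_self φ _ (ha m hm), ?_⟩⟩
  have hop : op (b.unop + a - b.unop * a) = op a + b - op a * b := by
    simp only [op_sub, op_add, op_mul, op_unop]
    abel
  rw [hop]
  exact map_circle_smul_eq_self ψ _ (hb m hm)

end LocalUnits

section ActionHoms

variable {A M : Type*} [NonUnitalRing A] [AddCommGroup M]

def leftActionHom (l : A → M → M) (hl_addM : ∀ (a : A) (m n : M), l a (m + n) = l a m + l a n)
    (hl_addA : ∀ (a b : A) (m : M), l (a + b) m = l a m + l b m)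
    (hl_mul : ∀ (a b : A) (m : M), l (a * b) m = l a (l b m)) : A →ₙ+* AddMonoid.End M :=
  { AddMonoidHom.mk' (fun a => AddMonoidHom.mk' (l a) (hl_addM a))
      fun a b => AddMonoidHom.ext (hl_addA a b) with
    map_mul' := fun a b => AddMonoidHom.ext (hl_mul a b) }

def rightActionHom (r : M → A → M) (hr_addM : ∀ (m n : M) (a : A), r (m + n) a = r m a + r n a)
    (hr_addA : ∀ (m : M) (a b : A), r m (a + b) = r m a + r m b)
    (hr_mul : ∀ (m : M) (a b : A), r m (a * b) = r (r m a) b) : Aᵐᵒᵖ →ₙ+* AddMonoid.End M :=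
  { AddMonoidHom.mk'
      (fun a : Aᵐᵒᵖ => AddMonoidHom.mk' (fun m => r m a.unop) fun m n => hr_addM m n a.unop)
      fun a b => AddMonoidHom.ext fun m => hr_addA m a.unop b.unop with
    map_mul' := fun a b => AddMonoidHom.ext fun m => hr_mul m b.unop a.unop }

end ActionHoms

theorem stmt13_general {A M : Type*} [NonUnitalRing A] [AddCommGroup M]
    (l : A → M → M) (r : M → A → M)
    (hl_addM : ∀ (a : A) (m n : M), l a (m + n) = l a m + l a n)
    (hl_addA : ∀ (a b : A) (m : M), l (a + b) m = l a m + l b m)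
    (hl_mul : ∀ (a b : A) (m : M), l (a * b) m = l a (l b m))
    (hr_addM : ∀ (m n : M) (a : A), r (m + n) a = r m a + r n a)
    (hr_addA : ∀ (m : M) (a b : A), r m (a + b) = r m a + r m b)
    (hr_mul : ∀ (m : M) (a b : A), r m (a * b) = r (r m a) b) :
    ((∀ m : M, ∃ a : A, l a m = m) ∧ (∀ m : M, ∃ b : A, r m b = m)) ↔
      ∀ (n : ℕ) (f : Fin n → M), ∃ c : A, ∀ i : Fin n, l c (f i) = f i ∧ r (f i) c = f i := by
  constructor
  · rintro ⟨hl, hr⟩ n f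
    classical
    obtain ⟨c, hc⟩ := exists_two_sided_smul_eq_self_of_finset
      (leftActionHom l hl_addM hl_addA hl_mul) (rightActionHom r hr_addM hr_addA hr_mul) hl hr
      (Finset.univ.image f)
    exact ⟨c, fun i => hc (f i) (Finset.mem_image_of_mem f (Finset.mem_univ i))⟩
  · intro h
    exact ⟨fun m => (h 1 fun _ => m).imp fun _ hc => (hc 0).1,
      fun m => (h 1 fun _ => m).imp fun _ hc => (hc 0).2⟩

/-- Let `A` be a (possibly non-unital) ring and `M` an `A`-bimodule,
with left action `l` and right action `r`. Then `M` is s-unital (for every `m` there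
are `a, b ∈ A` with `a • m = m` and `m • b = m`) iff for every `n ∈ ℕ` and all
`m₁, …, mₙ ∈ M` there is a single `c ∈ A` with `c • mᵢ = mᵢ • c = mᵢ` for all `i`. -/
theorem stmt13 {A M : Type*} [NonUnitalRing A] [AddCommGroup M]
    (l : A → M → M) (r : M → A → M)
    (hl_addM : ∀ (a : A) (m n : M), l a (m + n) = l a m + l a n)
    (hl_addA : ∀ (a b : A) (m : M), l (a + b) m = l a m + l b m)
    (hl_mul : ∀ (a b : A) (m : M), l (a * b) m = l a (l b m))
    (hr_addM : ∀ (m n : M) (a : A), r (m + n) a = r m a + r n a)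
    (hr_addA : ∀ (m : M) (a b : A), r m (a + b) = r m a + r m b)
    (hr_mul : ∀ (m : M) (a b : A), r m (a * b) = r (r m a) b)
    (hcompat : ∀ (a : A) (m : M) (b : A), r (l a m) b = l a (r m b)) :
    ((∀ m : M, ∃ a : A, l a m = m) ∧ (∀ m : M, ∃ b : A, r m b = m)) ↔
      ∀ (n : ℕ) (f : Fin n → M), ∃ c : A, ∀ i : Fin n, l c (f i) = f i ∧ r (f i) c = f i :=
  stmt13_general l r hl_addM hl_addA hl_mul hr_addM hr_addA hr_mul

end PaperMod
end

section
/- A ring A is s-unital (for every a ∈ A there exist b, c ∈ A with ba = a and ac = a) if and only if for every n ∈ ℕ and all a_1, …, a_n ∈ A there exists c ∈ A such that c a_i = a_i c = a_i for all i ∈ {1, …, n}. -/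
/-!
Left units for finitely many elements are built one element at a time: if `e * x = x` for
`x ∈ s` and `g` is a left unit for `a - e * a`, then `e + g - g * e` is a left unit for
`s ∪ {a}`, since `(e + g - g * e) * x = e * x + g * (x - e * x)`. Right units follow by passing
to the opposite ring, and a left unit `x` and a right unit `y` for the same elements combine
into the two-sided unit `x + y - y * x`.
-/

namespace PaperMod

section

variable {A : Type*} [NonUnitalRing A]

theorem exists_left_identity_on_finset (h : ∀ a : A, ∃ b, b * a = a) (s : Finset A) :
    ∃ e : A, ∀ a ∈ s, e * a = a := by
  classical
  induction s using Finset.induction_on with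
  | empty => exact ⟨0, by simp⟩
  | insert a s _ ih =>
    obtain ⟨e, he⟩ := ih
    obtain ⟨g, hg⟩ := h (a - e * a)
    have expand (x : A) : (e + g - g * e) * x = e * x + g * (x - e * x) := by noncomm_ring
    refine ⟨e + g - g * e, ?_⟩
    simp only [Finset.mem_insert, forall_eq_or_imp, expand, hg]
    exact ⟨by abel, fun x hx => by rw [he x hx, sub_self, mul_zero, add_zero]⟩

theorem exists_right_identity_on_finset (h : ∀ a : A, ∃ c, a * c = a) (s : Finset A) :
    ∃ e : A, ∀ a ∈ s, a * e = a := by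
  have hop (a : Aᵐᵒᵖ) : ∃ b, b * a = a := by
    obtain ⟨c, hc⟩ := h a.unop
    exact ⟨MulOpposite.op c, MulOpposite.unop_injective hc⟩
  obtain ⟨e, he⟩ := exists_left_identity_on_finset hop (s.map MulOpposite.opEquiv.toEmbedding)
  refine ⟨e.unop, fun a ha => MulOpposite.op_injective (he _ ?_)⟩
  exact Finset.mem_map_of_mem _ ha

theorem mul_add_sub_mul_eq_self {x y a : A} (hx : x * a = a) (hy : a * y = a) :
    (x + y - y * x) * a = a ∧ a * (x + y - y * x) = a := by
  constructor
  · rw [sub_mul, add_mul, mul_assoc, hx]; abel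
  · rw [mul_sub, mul_add, ← mul_assoc, hy]; abel

theorem exists_identity_on_finset (h : ∀ a : A, ∃ b c : A, b * a = a ∧ a * c = a)
    (s : Finset A) : ∃ e : A, ∀ a ∈ s, e * a = a ∧ a * e = a := by
  obtain ⟨x, hx⟩ := exists_left_identity_on_finset (fun a => (h a).imp fun _ ⟨_, hc⟩ => hc.1) s
  obtain ⟨y, hy⟩ := exists_right_identity_on_finset
    (fun a => (h a).elim fun _ ⟨c, hc⟩ => ⟨c, hc.2⟩) s
  exact ⟨x + y - y * x, fun a ha => mul_add_sub_mul_eq_self (hx a ha) (hy a ha)⟩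

end

/-- A (possibly non-unital) ring `A` is s-unital (for every `a ∈ A`
there are `b, c ∈ A` with `b a = a` and `a c = a`) iff for every `n ∈ ℕ` and all
`a₁, …, aₙ ∈ A` there is a single `c ∈ A` with `c aᵢ = aᵢ c = aᵢ` for all `i`. -/
theorem stmt14 {A : Type*} [NonUnitalRing A] :
    (∀ a : A, ∃ b c : A, b * a = a ∧ a * c = a) ↔
      ∀ (n : ℕ) (f : Fin n → A), ∃ c : A, ∀ i : Fin n, c * f i = f i ∧ f i * c = f i := by
  classical
  constructor
  · intro h n f
    obtain ⟨e, he⟩ := exists_identity_on_finset h (Finset.univ.image f)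
    exact ⟨e, fun i => he (f i) (Finset.mem_image_of_mem f (Finset.mem_univ i))⟩
  · intro h a
    obtain ⟨c, hc⟩ := h 1 fun _ => a
    exact ⟨c, c, hc 0⟩

end PaperMod
end

section
/- Let K be a nonzero s-unital ring and let X be a locally compact Hausdorff totally disconnected topological space. Let L_c(X) be the ring of locally constant compactly supported functions X → K under pointwise operations. If I is a two-sided ideal of L_c(X) such that for every k ∈ K and every x ∈ X there exists a compact open subset V of X with x ∈ V and k_V ∈ I, then I = L_c(X). -/
/-!
Gluing the given sets `V` over a finite cover of a compact `D`, via
`l_{A ∪ B} = l_A + l_B - l_A m_B` for a right unit `m` of `l`, puts `l_U` in `I` for a compact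
open `U ⊇ D`; then `k_D = l_U k_D ∈ I` for a left unit `l` of `k`. A locally constant compactly
supported `f` has finite range, and `f = ∑ₖ k_{f⁻¹(k)}` with every nonzero fibre compact clopen.
-/

namespace PaperLc

open Set

section Indicator

variable {X K : Type*} [NonUnitalRing K]

lemma indicator_const_mul_indicator_const (A B : Set X) (a b : K) :
    (A.indicator fun _ => a) * (B.indicator fun _ => b) = (A ∩ B).indicator fun _ => a * b :=
  funext fun _ => (inter_indicator_mul _ _ _).symm

lemma indicator_union_const {l m : K} (hlm : l * m = l) (A B : Set X) :
    ((A ∪ B).indicator fun _ => l) = (A.indicator fun _ => l) + (B.indicator fun _ => l) -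
      (A.indicator fun _ => l) * (B.indicator fun _ => m) := by
  rw [indicator_const_mul_indicator_const, hlm, ← indicator_union_add_inter, add_sub_cancel_right]

lemma sum_indicator_fiber {f : X → K} {s : Finset K} (hs : ∀ x, f x ∈ s) :
    ∑ k ∈ s, (f ⁻¹' {k}).indicator (fun _ => k) = f := by
  funext x
  rw [Finset.sum_apply, Finset.sum_eq_single_of_mem (f x) (hs x)]
  · simp
  · intro k _ hk
    exact indicator_of_notMem (s := f ⁻¹' {k}) (Ne.symm hk) _

end Indicator

section Topology

variable {X Y : Type*} [TopologicalSpace X]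

lemma _root_.IsLocallyConstant.finite_range_of_hasCompactSupport [Zero Y] {f : X → Y}
    (hf : IsLocallyConstant f) (hc : HasCompactSupport f) : (range f).Finite := by
  let : TopologicalSpace Y := ⊥
  have := discreteTopology_bot Y
  exact ((hc.isCompact.image hf.continuous).finite_of_discrete.insert 0).subset
    (range_subset_insert_image_tsupport f)

lemma isLocallyConstant_indicator_const [Zero Y] {D : Set X} (hD : IsClopen D) (y : Y) :
    IsLocallyConstant (D.indicator fun _ => y) :=
  ((LocallyConstant.const X y).indicator hD).isLocallyConstant

lemma hasCompactSupport_indicator_const [Zero Y] {D : Set X} (hc : IsCompact D)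
    (hcl : IsClosed D) (y : Y) : HasCompactSupport (D.indicator fun _ => y) :=
  HasCompactSupport.intro' hc hcl fun _ hx => indicator_of_notMem hx _

end Topology

section Ideal

variable {K X : Type*} [NonUnitalRing K] {Lc : NonUnitalSubring (X → K)}
  {I : AddSubgroup Lc}

def funIdeal (I : AddSubgroup Lc) : AddSubgroup (X → K) :=
  I.map (AddSubgroupClass.subtype Lc)

lemma mem_funIdeal {g : X → K} : g ∈ funIdeal I ↔ ∃ f ∈ I, (f : X → K) = g :=
  AddSubgroup.mem_map

lemma indicator_const_mem [TopologicalSpace X]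
    (hLc : ∀ f : X → K, f ∈ Lc ↔ IsLocallyConstant f ∧ HasCompactSupport f)
    {D : Set X} (hc : IsCompact D) (hD : IsClopen D) (k : K) :
    (D.indicator fun _ => k) ∈ Lc :=
  (hLc _).2
    ⟨isLocallyConstant_indicator_const hD k, hasCompactSupport_indicator_const hc hD.1 k⟩

lemma mul_mem_funIdeal_right (hI : ∀ r : Lc, ∀ f ∈ I, f * r ∈ I)
    {g r : X → K} (hg : g ∈ funIdeal I) (hr : r ∈ Lc) :
    g * r ∈ funIdeal I := by
  obtain ⟨f, hf, rfl⟩ := mem_funIdeal.1 hg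
  exact mem_funIdeal.2 ⟨f * ⟨r, hr⟩, hI _ _ hf, rfl⟩

variable [TopologicalSpace X] [T2Space X]

lemma exists_superset_indicator_const_mem
    (hLc : ∀ f : X → K, f ∈ Lc ↔ IsLocallyConstant f ∧ HasCompactSupport f)
    (hI : ∀ r : Lc, ∀ f ∈ I, f * r ∈ I)
    {l m : K} (hlm : l * m = l)
    (hV : ∀ x : X, ∃ V : Set X, IsCompact V ∧ IsOpen V ∧ x ∈ V ∧
      (V.indicator fun _ => l) ∈ funIdeal I)
    {D : Set X} (hD : IsCompact D) :
    ∃ U : Set X, IsCompact U ∧ IsOpen U ∧ D ⊆ U ∧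
      (U.indicator fun _ => l) ∈ funIdeal I := by
  refine hD.induction_on ?_ ?_ ?_ ?_
  · refine ⟨∅, isCompact_empty, isOpen_empty, subset_rfl, ?_⟩
    rw [indicator_empty']
    exact zero_mem _
  · rintro s t hst ⟨U, hUc, hUo, htU, hU⟩
    exact ⟨U, hUc, hUo, hst.trans htU, hU⟩
  · rintro s t ⟨U, hUc, hUo, hsU, hU⟩ ⟨W, hWc, hWo, htW, hW⟩
    refine ⟨U ∪ W, hUc.union hWc, hUo.union hWo, union_subset_union hsU htW, ?_⟩
    rw [indicator_union_const hlm]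
    exact sub_mem (add_mem hU hW)
      (mul_mem_funIdeal_right hI hU (indicator_const_mem hLc hWc ⟨hWc.isClosed, hWo⟩ m))
  · intro x _
    obtain ⟨V, hVc, hVo, hxV, hV⟩ := hV x
    exact ⟨V, mem_nhdsWithin_of_mem_nhds (hVo.mem_nhds hxV), V, hVc, hVo, subset_rfl, hV⟩

lemma indicator_const_mem_funIdeal
    (hLc : ∀ f : X → K, f ∈ Lc ↔ IsLocallyConstant f ∧ HasCompactSupport f)
    (hI : ∀ r : Lc, ∀ f ∈ I, f * r ∈ I)
    {k l m : K} (hlk : l * k = k) (hlm : l * m = l)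
    (hV : ∀ x : X, ∃ V : Set X, IsCompact V ∧ IsOpen V ∧ x ∈ V ∧
      (V.indicator fun _ => l) ∈ funIdeal I)
    {D : Set X} (hc : IsCompact D) (hD : IsClopen D) :
    (D.indicator fun _ => k) ∈ funIdeal I := by
  obtain ⟨U, -, -, hDU, hU⟩ := exists_superset_indicator_const_mem hLc hI hlm hV hc
  have := mul_mem_funIdeal_right hI hU (indicator_const_mem hLc hc hD k)
  rwa [indicator_const_mul_indicator_const, hlk, inter_eq_right.2 hDU] at this

lemma mem_funIdeal_of_mem
    (hLc : ∀ f : X → K, f ∈ Lc ↔ IsLocallyConstant f ∧ HasCompactSupport f)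
    (hI : ∀ r : Lc, ∀ f ∈ I, f * r ∈ I)
    (hK : ∀ k : K, ∃ l l' : K, l * k = k ∧ k * l' = k)
    (hV : ∀ (k : K) (x : X), ∃ V : Set X, IsCompact V ∧ IsOpen V ∧ x ∈ V ∧
      (V.indicator fun _ => k) ∈ funIdeal I)
    {f : X → K} (hf : f ∈ Lc) : f ∈ funIdeal I := by
  obtain ⟨hflc, hfc⟩ := (hLc f).1 hf
  have hfin := hflc.finite_range_of_hasCompactSupport hfc
  rw [← sum_indicator_fiber (s := hfin.toFinset) fun x => hfin.mem_toFinset.2 (mem_range_self x)]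
  refine sum_mem fun k _ => ?_
  rcases eq_or_ne k 0 with rfl | hk
  · rw [indicator_zero]
    exact zero_mem _
  · obtain ⟨l, -, hlk, -⟩ := hK k
    obtain ⟨-, m, -, hlm⟩ := hK l
    have hsupp : f ⁻¹' {k} ⊆ tsupport f := fun x (hx : f x = k) =>
      subset_tsupport f (by rwa [Function.mem_support, hx])
    exact indicator_const_mem_funIdeal hLc hI hlk hlm (hV l)
      (hfc.of_isClosed_subset (hflc.isClopen_fiber k).isClosed hsupp) (hflc.isClopen_fiber k)

end Ideal

theorem stmt18_general {K : Type*} [NonUnitalRing K]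
    (hK : ∀ k : K, ∃ l l' : K, l * k = k ∧ k * l' = k)
    {X : Type*} [TopologicalSpace X] [T2Space X]
    (Lc : NonUnitalSubring (X → K))
    (hLc : ∀ f : X → K, f ∈ Lc ↔ IsLocallyConstant f ∧ HasCompactSupport f)
    (I : AddSubgroup Lc)
    (hI : ∀ r : Lc, ∀ f ∈ I, r * f ∈ I ∧ f * r ∈ I)
    (h : ∀ (k : K) (x : X), ∃ V : Set X, IsCompact V ∧ IsOpen V ∧ x ∈ V ∧
      ∃ f ∈ I, (f : X → K) = V.indicator fun _ => k) :
    I = ⊤ := by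
  simp only [← mem_funIdeal] at h
  have hIr : ∀ r : Lc, ∀ f ∈ I, f * r ∈ I := fun r f hf => (hI r f hf).2
  rw [eq_top_iff]
  rintro f -
  obtain ⟨g, hg, hgf⟩ := mem_funIdeal.1 (mem_funIdeal_of_mem hLc hIr hK h f.2)
  rwa [← Subtype.ext hgf]

/-- Let `K` be a nonzero s-unital ring and `X` a locally compact
Hausdorff totally disconnected space. Let `Lc` be the (non-unital) ring of locally
constant compactly supported functions `X → K`, realised as the non-unital subring of
`X → K` whose elements are exactly the locally constant compactly supported functions.
If `I` is a two-sided ideal of `Lc` such that for every `k ∈ K` and every `x ∈ X`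
there is a compact open `V ⊆ X` with `x ∈ V` and the function `k_V` (value `k` on `V`,
`0` outside) in `I`, then `I = Lc`. -/
theorem stmt18 {K : Type*} [NonUnitalRing K] [Nontrivial K]
    (hK : ∀ k : K, ∃ l l' : K, l * k = k ∧ k * l' = k)
    {X : Type*} [TopologicalSpace X] [LocallyCompactSpace X] [T2Space X]
    [TotallyDisconnectedSpace X]
    (Lc : NonUnitalSubring (X → K))
    (hLc : ∀ f : X → K, f ∈ Lc ↔ IsLocallyConstant f ∧ HasCompactSupport f)
    (I : AddSubgroup Lc)
    (hI : ∀ r : Lc, ∀ f ∈ I, r * f ∈ I ∧ f * r ∈ I)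
    (h : ∀ (k : K) (x : X), ∃ V : Set X, IsCompact V ∧ IsOpen V ∧ x ∈ V ∧
      ∃ f ∈ I, (f : X → K) = V.indicator fun _ => k) :
    I = ⊤ :=
  stmt18_general hK Lc hLc I hI h

end PaperLc
end
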